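/- Let λ1 ≥ λ2 ≥ 0 > λ3 ≥ λ4 ≥ λ5 ≥ −λ1 be real numbers with λ2 + λ5 ≥ 0 and λ1 + λ3 + λ4 ≥ 0. Set d = √(−(λ3+λ4)(λ1+λ4)/2). Then the quantity under the square root is nonnegative, and the 5×5 matrix L3 with rows ((λ2+λ5)/2, 0, 0, 0, (λ2−λ5)/2), (0, 0, d, −λ4, 0), (0, d, λ1+λ3+λ4, d, 0), (0, −λ4, d, 0, 0), ((λ2−λ5)/2, 0, 0, 0, (λ2+λ5)/2) is nonnegative and bisymmetric, and its spectrum is λ1, λ2, λ3, λ4, λ5. -/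

import Mathlib

open Matrix Polynomial

/-- The 5×5 reverse identity (exchange) matrix. -/
def J5 : Matrix (Fin 5) (Fin 5) ℝ :=
  Matrix.of fun i j => if (i : ℕ) + (j : ℕ) = 4 then 1 else 0

/-!
The matrix splits along the exchange-symmetric and antisymmetric vectors. The corner block acts
on `e₁ ± e₅` with eigenvalues `(λ₂ + λ₅)/2 ± (λ₂ - λ₅)/2 = λ₂, λ₅`; the vector `e₂ - e₄` has
eigenvalue `λ₄`; and on `span(e₂ + e₄, e₃)` the matrix acts as `[[-λ₄, √2 d], [√2 d, λ₁ + λ₃ + λ₄]]`,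
whose characteristic polynomial `(X + λ₄)(X - λ₁ - λ₃ - λ₄) - 2d²` is `(X - λ₁)(X - λ₃)` exactly
because of the choice of `d`.
-/

lemma J5_apply (i j : Fin 5) : J5 i j = if i = j.rev then 1 else 0 := by
  simp only [J5, of_apply, Fin.ext_iff, Fin.val_rev]
  congr 1
  apply propext
  omega

lemma mul_J5_apply {n : Type*} (A : Matrix n (Fin 5) ℝ) (i : n) (j : Fin 5) :
    (A * J5) i j = A i j.rev := by
  simp [mul_apply, J5_apply]

lemma J5_mul_apply {n : Type*} (A : Matrix (Fin 5) n ℝ) (i : Fin 5) (j : n) :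
    (J5 * A) i j = A i.rev j := by
  simp [mul_apply, J5_apply, ← Fin.rev_eq_iff]

def crossMatrix (p q s t d : ℝ) : Matrix (Fin 5) (Fin 5) ℝ :=
  !![p, 0, 0, 0, q;
     0, 0, d, t, 0;
     0, d, s, d, 0;
     0, t, d, 0, 0;
     q, 0, 0, 0, p]

section crossMatrix

variable (p q s t d : ℝ)

lemma crossMatrix_transpose : (crossMatrix p q s t d)ᵀ = crossMatrix p q s t d := by
  ext i j
  fin_cases i <;> fin_cases j <;> rfl

lemma crossMatrix_mul_J5 : crossMatrix p q s t d * J5 = J5 * crossMatrix p q s t d := by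
  ext i j
  rw [mul_J5_apply, J5_mul_apply]
  fin_cases i <;> fin_cases j <;> rfl

lemma crossMatrix_nonneg (hp : 0 ≤ p) (hq : 0 ≤ q) (hs : 0 ≤ s) (ht : 0 ≤ t) (hd : 0 ≤ d)
    (i j : Fin 5) : 0 ≤ crossMatrix p q s t d i j := by
  fin_cases i <;> fin_cases j <;> simp [crossMatrix] <;> assumption

lemma crossMatrix_charpoly : (crossMatrix p q s t d).charpoly =
    (X - C (p + q)) * (X - C (p - q)) * (X + C t) * ((X - C t) * (X - C s) - 2 * C d ^ 2) := by
  rw [Matrix.charpoly, charmatrix, crossMatrix]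
  simp [Matrix.det_succ_row_zero, Fin.sum_univ_succ, Fin.succAbove, Matrix.submatrix]
  ring

end crossMatrix

lemma crossMatrix_charpoly_eq_prod (l1 l2 l3 l4 l5 d : ℝ)
    (hd : 2 * d ^ 2 = -((l3 + l4) * (l1 + l4))) :
    (crossMatrix ((l2 + l5) / 2) ((l2 - l5) / 2) (l1 + l3 + l4) (-l4) d).charpoly =
      (X - C l1) * (X - C l2) * (X - C l3) * (X - C l4) * (X - C l5) := by
  have hdC := congrArg C hd
  simp only [map_mul, map_pow, map_neg, map_add, map_ofNat] at hdC
  have hplus : (l2 + l5) / 2 + (l2 - l5) / 2 = l2 := by ring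
  have hminus : (l2 + l5) / 2 - (l2 - l5) / 2 = l5 := by ring
  rw [crossMatrix_charpoly, hplus, hminus]
  simp only [map_neg, map_add]
  linear_combination -(X - C l2) * (X - C l5) * (X - C l4) * hdC

theorem stmt_8_general (l1 l2 l3 l4 l5 : ℝ)
    (h3 : 0 > l3) (h34 : l3 ≥ l4) (h45 : l4 ≥ l5)
    (h25 : l2 + l5 ≥ 0) (h134 : l1 + l3 + l4 ≥ 0) :
    0 ≤ -((l3 + l4) * (l1 + l4)) / 2 ∧
    let d : ℝ := Real.sqrt (-((l3 + l4) * (l1 + l4)) / 2)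
    let L3 : Matrix (Fin 5) (Fin 5) ℝ :=
      !![(l2 + l5) / 2, 0, 0, 0, (l2 - l5) / 2;
         0, 0, d, -l4, 0;
         0, d, l1 + l3 + l4, d, 0;
         0, -l4, d, 0, 0;
         (l2 - l5) / 2, 0, 0, 0, (l2 + l5) / 2]
    (∀ i j, 0 ≤ L3 i j) ∧ L3 = L3ᵀ ∧ L3 * J5 = J5 * L3 ∧
      L3.charpoly = (X - C l1) * (X - C l2) * (X - C l3) * (X - C l4) * (X - C l5) := by
  have hrad : 0 ≤ -((l3 + l4) * (l1 + l4)) / 2 := by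
    have := mul_nonneg (neg_nonneg.2 (by linarith : l3 + l4 ≤ 0)) (by linarith : 0 ≤ l1 + l4)
    linarith
  refine ⟨hrad, ?_⟩
  intro d L3
  have hL3 : L3 = crossMatrix ((l2 + l5) / 2) ((l2 - l5) / 2) (l1 + l3 + l4) (-l4) d := rfl
  rw [hL3]
  refine ⟨crossMatrix_nonneg _ _ _ _ _ (by linarith) (by linarith) h134 (by linarith)
      (Real.sqrt_nonneg _), (crossMatrix_transpose ..).symm, crossMatrix_mul_J5 .., ?_⟩
  apply crossMatrix_charpoly_eq_prod
  rw [Real.sq_sqrt hrad]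
  ring

theorem stmt_8 (l1 l2 l3 l4 l5 : ℝ)
    (h12 : l1 ≥ l2) (h2 : l2 ≥ 0) (h3 : 0 > l3) (h34 : l3 ≥ l4) (h45 : l4 ≥ l5)
    (h5 : l5 ≥ -l1)
    (h25 : l2 + l5 ≥ 0) (h134 : l1 + l3 + l4 ≥ 0) :
    0 ≤ -((l3 + l4) * (l1 + l4)) / 2 ∧
    let d : ℝ := Real.sqrt (-((l3 + l4) * (l1 + l4)) / 2)
    let L3 : Matrix (Fin 5) (Fin 5) ℝ :=
      !![(l2 + l5) / 2, 0, 0, 0, (l2 - l5) / 2;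
         0, 0, d, -l4, 0;
         0, d, l1 + l3 + l4, d, 0;
         0, -l4, d, 0, 0;
         (l2 - l5) / 2, 0, 0, 0, (l2 + l5) / 2]
    (∀ i j, 0 ≤ L3 i j) ∧ L3 = L3ᵀ ∧ L3 * J5 = J5 * L3 ∧
      L3.charpoly = (X - C l1) * (X - C l2) * (X - C l3) * (X - C l4) * (X - C l5) :=
  stmt_8_general l1 l2 l3 l4 l5 h3 h34 h45 h25 h134
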